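/- (Lower estimate) Let R > q > p > 1, f analytic in D_R with f not a polynomial of degree ≤ 1, and fix suitable 1 ≤ r < r_1. Then there is a constant C_{r,r_1,p,q}(f) > 0 depending only on f, r, r_1, p, q such that ‖L_{n,p,q}(f) - f‖_r ≥ (p^n/[n]_{p,q}) · C_{r,r_1,p,q}(f) for all n ∈ ℕ, where ‖g‖_r = max_{|z|≤r} |g(z)|. -/

import Mathlib

/-- The `(p,q)`-integer `[n]_{p,q} = (q^n - p^n)/(q - p)`. -/
noncomputable def pqInt (p q : ℝ) (n : ℕ) : ℝ := (q ^ n - p ^ n) / (q - p)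

/-- The `(p,q)`-factorial `[n]_{p,q}! = [1]_{p,q}·[2]_{p,q}···[n]_{p,q}`. -/
noncomputable def pqFact (p q : ℝ) : ℕ → ℝ
  | 0 => 1
  | n + 1 => pqFact p q n * pqInt p q (n + 1)

/-- The `(p,q)`-binomial coefficient. -/
noncomputable def pqBinom (p q : ℝ) (n k : ℕ) : ℝ :=
  pqFact p q n / (pqFact p q k * pqFact p q (n - k))

/-- The `(p,q)`-derivative, with `D_{p,q}f(0) = f'(0)`. -/
noncomputable def pqDeriv (p q : ℝ) (f : ℂ → ℂ) (x : ℂ) : ℂ :=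
  if x = 0 then deriv f 0 else (f ((p : ℂ) * x) - f ((q : ℂ) * x)) / (((p : ℂ) - q) * x)

/-- Iterated `(p,q)`-derivative `D_{p,q}^{(k)}`. -/
noncomputable def pqDerivIter (p q : ℝ) : ℕ → (ℂ → ℂ) → (ℂ → ℂ)
  | 0, f => f
  | k + 1, f => pqDeriv p q (pqDerivIter p q k f)

/-- The complex `(p,q)`-Lorentz polynomial
`L_{n,p,q}(f)(z) = Σ_{k=0}^{n} q^{k(k-1)/2} binom(n,k)_{p,q} (z/[n]_{p,q})^k D_{p,q}^{(k)}f(0)`. -/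
noncomputable def lorentz (p q : ℝ) (n : ℕ) (f : ℂ → ℂ) (z : ℂ) : ℂ :=
  ∑ k ∈ Finset.range (n + 1),
    (q : ℂ) ^ (k * (k - 1) / 2) * (pqBinom p q n k : ℂ) *
      (z / (pqInt p q n : ℂ)) ^ k * pqDerivIter p q k f 0

/-- `‖g‖_r = max_{|z| ≤ r} |g(z)|`. -/
noncomputable def supNorm (r : ℝ) (g : ℂ → ℂ) : ℝ :=
  sSup ((fun z => ‖g z‖) '' Metric.closedBall (0 : ℂ) r)

/-! Rather than through the Voronovskaja asymptotics, the bound is read off one Taylor coefficient.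
Since `D_{p,q}^k f(0) = [k]_{p,q}! c_k`, the Lorentz polynomial is `Σ_k λ_{n,k} c_k z^k` with
`λ_{n,k} = ∏_{j<k} q^j [n-j]_{p,q} / [n]_{p,q}`, a product of factors in `[0, 1]` whose factor
`j = 1` equals `1 - p^{n-1}/[n]_{p,q}`. Hence for `k ≥ 2` the `k`-th coefficient of
`L_{n,p,q}(f) - f` has modulus at least `p^{n-1}/[n]_{p,q} · |c_k|`, and Cauchy's estimate
`|a_k| r^k ≤ ‖g‖_r` gives the claim with `C = |c_k| r^k / p` for any `k ≥ 2` with `c_k ≠ 0`. -/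

open Finset Metric FormalMultilinearSeries

theorem norm_le_supNorm {r : ℝ} {g : ℂ → ℂ} (hg : ContinuousOn g (closedBall 0 r)) {z : ℂ}
    (hz : z ∈ closedBall 0 r) : ‖g z‖ ≤ supNorm r g :=
  le_csSup ((isCompact_closedBall 0 r).image_of_continuousOn hg.norm).bddAbove ⟨z, hz, rfl⟩

section PowerSeries

variable {a : ℕ → ℂ} {g : ℂ → ℂ} {ρ : ℝ}

theorem hasSum_mul_zero_pow (a : ℕ → ℂ) : HasSum (fun m => a m * 0 ^ m) (a 0) := by
  simpa using hasSum_single (f := fun m => a m * (0 : ℂ) ^ m) 0 fun m hm => by simp [hm]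

theorem hasFPowerSeriesOnBall_ofScalars_of_hasSum (hρ : 0 < ρ)
    (hg : ∀ z : ℂ, ‖z‖ < ρ → HasSum (fun m => a m * z ^ m) (g z)) :
    HasFPowerSeriesOnBall g (ofScalars ℂ a) 0 (ENNReal.ofReal ρ) where
  r_le := ENNReal.le_of_forall_nnreal_lt fun r hr => by
    have hrρ : (r : ℝ) < ρ := by simpa using (ENNReal.coe_lt_ofReal).1 hr
    refine (ofScalars ℂ a).le_radius_of_tendsto (l := 0) ?_
    have := (hg r (by simpa using hrρ)).summable.tendsto_atTop_zero.norm
    simpa [ofScalars_norm] using this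
  r_pos := ENNReal.ofReal_pos.2 hρ
  hasSum {y} hy := by
    rw [eball_ofReal, mem_ball_zero_iff] at hy
    simpa [ofScalars_apply_eq, mul_comm] using hg y hy

theorem differentiableOn_of_hasSum
    (hg : ∀ z : ℂ, ‖z‖ < ρ → HasSum (fun m => a m * z ^ m) (g z)) :
    DifferentiableOn ℂ g (ball 0 ρ) := by
  rcases le_or_gt ρ 0 with hρ | hρ
  · rw [ball_eq_empty.2 hρ]; exact differentiableOn_empty
  · simpa [eball_ofReal] using (hasFPowerSeriesOnBall_ofScalars_of_hasSum hρ hg).differentiableOn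

theorem coeff_eq_iteratedDeriv_div_factorial (hρ : 0 < ρ)
    (hg : ∀ z : ℂ, ‖z‖ < ρ → HasSum (fun m => a m * z ^ m) (g z)) (k : ℕ) :
    a k = iteratedDeriv k g 0 / k.factorial := by
  have hg₀ := (hasFPowerSeriesOnBall_ofScalars_of_hasSum hρ hg).hasFPowerSeriesAt
  exact congrFun (ofScalars_series_injective ℂ ℂ
    (hg₀.eq_formalMultilinearSeries hg₀.analyticAt.hasFPowerSeriesAt)) k

theorem deriv_zero_eq_of_hasSum (hρ : 0 < ρ)
    (hg : ∀ z : ℂ, ‖z‖ < ρ → HasSum (fun m => a m * z ^ m) (g z)) :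
    deriv g 0 = a 1 := by
  simp [coeff_eq_iteratedDeriv_div_factorial hρ hg 1]

theorem norm_coeff_mul_pow_le_supNorm
    (hg : ∀ z : ℂ, ‖z‖ < ρ → HasSum (fun m => a m * z ^ m) (g z)) {r : ℝ} (hr : 0 < r)
    (hrρ : r < ρ) (k : ℕ) : ‖a k‖ * r ^ k ≤ supNorm r g := by
  have hd := (differentiableOn_of_hasSum hg).mono (closedBall_subset_ball hrρ)
  have hcauchy := Complex.norm_iteratedDeriv_le_of_forall_mem_sphere_norm_le k hr
    ((differentiableOn_of_hasSum hg).diffContOnCl_ball (closedBall_subset_ball hrρ))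
    fun z hz => norm_le_supNorm hd.continuousOn (sphere_subset_closedBall hz)
  rw [coeff_eq_iteratedDeriv_div_factorial (hr.trans hrρ) hg, norm_div, Complex.norm_natCast,
    div_mul_eq_mul_div, div_le_iff₀ (by positivity)]
  calc ‖iteratedDeriv k g 0‖ * r ^ k ≤ k.factorial * supNorm r g / r ^ k * r ^ k := by gcongr
    _ = supNorm r g * k.factorial := by field_simp

end PowerSeries

section PQInt

variable {p q : ℝ}

theorem pqInt_add (p q : ℝ) (m j : ℕ) :
    pqInt p q (m + j) = q ^ j * pqInt p q m + p ^ m * pqInt p q j := by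
  simp only [pqInt, pow_add]
  ring

theorem pqInt_one (hpq : p ≠ q) : pqInt p q 1 = 1 := by
  simp [pqInt, div_self (sub_ne_zero.2 hpq.symm)]

theorem sub_mul_pqInt (hpq : p ≠ q) (n : ℕ) : (p - q) * pqInt p q n = p ^ n - q ^ n := by
  rw [pqInt, ← neg_sub q p, neg_mul, mul_div_cancel₀ _ (sub_ne_zero.2 hpq.symm)]
  ring

theorem pqInt_pos (hp : 0 ≤ p) (hpq : p < q) {n : ℕ} (hn : n ≠ 0) : 0 < pqInt p q n :=
  div_pos (sub_pos.2 (pow_lt_pow_left₀ hpq hp hn)) (sub_pos.2 hpq)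

theorem pqInt_nonneg (hp : 0 ≤ p) (hpq : p < q) (n : ℕ) : 0 ≤ pqInt p q n := by
  rcases eq_or_ne n 0 with rfl | hn
  · simp [pqInt]
  · exact (pqInt_pos hp hpq hn).le

theorem pqFact_pos (hp : 0 ≤ p) (hpq : p < q) (n : ℕ) : 0 < pqFact p q n := by
  induction n with
  | zero => simp [pqFact]
  | succ n ih => exact mul_pos ih (pqInt_pos hp hpq n.succ_ne_zero)

theorem pqFact_eq_mul_prod (p q : ℝ) {n k : ℕ} (hk : k ≤ n) :
    pqFact p q n = pqFact p q (n - k) * ∏ j ∈ range k, pqInt p q (n - j) := by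
  induction k with
  | zero => simp
  | succ k ih =>
    have hsplit : n - k = n - (k + 1) + 1 := by omega
    rw [ih (by omega), prod_range_succ, hsplit, pqFact, ← hsplit]
    ring

theorem pow_mul_pqInt_sub_le (hp : 0 ≤ p) (hpq : p < q) (n j : ℕ) :
    q ^ j * pqInt p q (n - j) ≤ pqInt p q n := by
  rcases le_or_gt j n with hj | hj
  · have h := pqInt_add p q (n - j) j
    rw [Nat.sub_add_cancel hj] at h
    nlinarith [pow_nonneg hp (n - j), pqInt_nonneg hp hpq j]
  · simpa [Nat.sub_eq_zero_of_le hj.le, pqInt] using pqInt_nonneg hp hpq n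

end PQInt

section PQDeriv

variable {p q : ℝ}

noncomputable def pqDerivCoeff (p q : ℝ) (d : ℕ → ℂ) (m : ℕ) : ℂ := pqInt p q (m + 1) * d (m + 1)

theorem pqDerivCoeff_iterate_zero (p q : ℝ) (k : ℕ) (d : ℕ → ℂ) :
    (pqDerivCoeff p q)^[k] d 0 = pqFact p q k * d k := by
  induction k generalizing d with
  | zero => simp [pqFact]
  | succ k ih =>
    rw [Function.iterate_succ_apply, ih, pqDerivCoeff, pqFact]
    push_cast
    ring

theorem hasSum_pqDeriv (hp : 0 ≤ p) (hpq : p < q) {d : ℕ → ℂ} {g : ℂ → ℂ} {ρ : ℝ}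
    (hg : ∀ z : ℂ, ‖z‖ < ρ → HasSum (fun m => d m * z ^ m) (g z)) {z : ℂ} (hz : ‖z‖ < ρ / q) :
    HasSum (fun m => pqDerivCoeff p q d m * z ^ m) (pqDeriv p q g z) := by
  have hq : 0 < q := hp.trans_lt hpq
  rcases eq_or_ne z 0 with rfl | hz₀
  · have hρ : 0 < ρ := by simpa [div_pos_iff_of_pos_right hq] using hz
    rw [pqDeriv, if_pos rfl, deriv_zero_eq_of_hasSum hρ hg]
    simpa [pqDerivCoeff, pqInt_one hpq.ne] using hasSum_mul_zero_pow (pqDerivCoeff p q d)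
  have hmem : ∀ t : ℝ, |t| ≤ q → ‖(t : ℂ) * z‖ < ρ := fun t ht => by
    rw [norm_mul, Complex.norm_real, Real.norm_eq_abs]
    calc |t| * ‖z‖ ≤ q * ‖z‖ := by gcongr
      _ < ρ := by rwa [lt_div_iff₀ hq, mul_comm] at hz
  have hdiff := (hasSum_nat_add_iff' 1).2
    ((hg _ (hmem p ((abs_of_nonneg hp).trans_le hpq.le))).sub (hg _ (hmem q (abs_of_pos hq).le)))
  have hscaled : HasSum (fun m => ((p - q) * z : ℂ) * (pqDerivCoeff p q d m * z ^ m))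
      (g (p * z) - g (q * z)) := by
    rw [sum_range_one, pow_zero, pow_zero, sub_self, sub_zero] at hdiff
    refine hdiff.congr_fun fun m => ?_
    have h : ((p : ℂ) - q) * pqInt p q (m + 1) = (p : ℂ) ^ (m + 1) - (q : ℂ) ^ (m + 1) := by
      exact_mod_cast sub_mul_pqInt hpq.ne (m + 1)
    simp only [pqDerivCoeff, mul_pow]
    linear_combination (d (m + 1) * z ^ (m + 1)) * h
  have hpqz : ((p - q) * z : ℂ) ≠ 0 :=
    mul_ne_zero (sub_ne_zero.2 (by exact_mod_cast hpq.ne)) hz₀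
  simpa [pqDeriv, hz₀, mul_div_cancel_left₀ _ hpqz] using hscaled.div_const ((p - q) * z : ℂ)

theorem hasSum_pqDerivIter (hp : 0 ≤ p) (hpq : p < q) {c : ℕ → ℂ} {f : ℂ → ℂ} {R : ℝ}
    (hf : ∀ z : ℂ, ‖z‖ < R → HasSum (fun m => c m * z ^ m) (f z)) (k : ℕ) {z : ℂ}
    (hz : ‖z‖ < R / q ^ k) :
    HasSum (fun m => (pqDerivCoeff p q)^[k] c m * z ^ m) (pqDerivIter p q k f z) := by
  induction k generalizing z with
  | zero => simpa [pqDerivIter] using hf z (by simpa using hz)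
  | succ k ih =>
    rw [Function.iterate_succ_apply']
    exact hasSum_pqDeriv hp hpq (fun w hw => ih hw) (by rwa [pow_succ, ← div_div] at hz)

theorem pqDerivIter_apply_zero (hp : 0 ≤ p) (hpq : p < q) {c : ℕ → ℂ} {f : ℂ → ℂ} {R : ℝ}
    (hR : 0 < R) (hf : ∀ z : ℂ, ‖z‖ < R → HasSum (fun m => c m * z ^ m) (f z)) (k : ℕ) :
    pqDerivIter p q k f 0 = pqFact p q k * c k := by
  have h := hasSum_pqDerivIter hp hpq hf k (z := 0)
    (by simpa using div_pos hR (pow_pos (hp.trans_lt hpq) k))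
  rw [← pqDerivCoeff_iterate_zero, h.unique (hasSum_mul_zero_pow _)]

end PQDeriv

section Lorentz

variable {p q : ℝ}

-- `n - j` truncates, so the factor `j = n` is `[0]_{p,q} = 0`: this also covers `k > n`.
noncomputable def lorentzCoeff (p q : ℝ) (n k : ℕ) : ℝ :=
  ∏ j ∈ range k, q ^ j * pqInt p q (n - j) / pqInt p q n

theorem lorentzCoeff_eq_zero (p q : ℝ) {n k : ℕ} (h : n < k) : lorentzCoeff p q n k = 0 :=
  prod_eq_zero (mem_range.2 h) (by simp [pqInt])

theorem pow_mul_pqBinom_mul_pqFact_div (hp : 0 ≤ p) (hpq : p < q) {n k : ℕ} (hk : k ≤ n) :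
    q ^ (k * (k - 1) / 2) * pqBinom p q n k * pqFact p q k / pqInt p q n ^ k =
      lorentzCoeff p q n k := by
  have hbinom : pqBinom p q n k * pqFact p q k = ∏ j ∈ range k, pqInt p q (n - j) := by
    have := pqFact_pos hp hpq k
    have := pqFact_pos hp hpq (n - k)
    rw [pqBinom, pqFact_eq_mul_prod p q hk]
    field_simp
  have hpow : q ^ (k * (k - 1) / 2) = ∏ j ∈ range k, q ^ j := by
    rw [prod_pow_eq_pow_sum, sum_range_id]
  rw [lorentzCoeff, prod_div_distrib, prod_mul_distrib, mul_assoc, hbinom, hpow, prod_const,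
    card_range]

theorem lorentz_eq_sum (hp : 0 ≤ p) (hpq : p < q) {f : ℂ → ℂ} {c : ℕ → ℂ}
    (hf₀ : ∀ k, pqDerivIter p q k f 0 = pqFact p q k * c k) (n : ℕ) (z : ℂ) :
    lorentz p q n f z = ∑ k ∈ range (n + 1), lorentzCoeff p q n k * c k * z ^ k := by
  refine sum_congr rfl fun k hk => ?_
  rw [hf₀, ← pow_mul_pqBinom_mul_pqFact_div hp hpq (Nat.lt_succ_iff.1 (mem_range.1 hk))]
  push_cast
  ring

theorem hasSum_lorentz_sub_self (hp : 0 ≤ p) (hpq : p < q) {f : ℂ → ℂ} {c : ℕ → ℂ} {R : ℝ}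
    (hf : ∀ z : ℂ, ‖z‖ < R → HasSum (fun m => c m * z ^ m) (f z)) (n : ℕ) {z : ℂ}
    (hz : ‖z‖ < R) :
    HasSum (fun k => (lorentzCoeff p q n k - 1) * c k * z ^ k) (lorentz p q n f z - f z) := by
  have hR : 0 < R := (norm_nonneg z).trans_lt hz
  have hL : HasSum (fun k => lorentzCoeff p q n k * c k * z ^ k) (lorentz p q n f z) := by
    rw [lorentz_eq_sum hp hpq (pqDerivIter_apply_zero hp hpq hR hf)]
    refine hasSum_sum_of_ne_finset_zero fun k hk => ?_
    rw [lorentzCoeff_eq_zero p q (by simpa [Nat.lt_succ_iff] using hk)]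
    simp
  simpa [sub_mul] using hL.sub (hf z hz)

theorem lorentzCoeff_le (hp : 0 ≤ p) (hpq : p < q) {n k : ℕ} (hn : n ≠ 0) (hk : 2 ≤ k) :
    lorentzCoeff p q n k ≤ 1 - p ^ (n - 1) / pqInt p q n := by
  have hIn := pqInt_pos hp hpq hn
  set F : ℕ → ℝ := fun j => q ^ j * pqInt p q (n - j) / pqInt p q n
  have hF_nonneg : ∀ j, 0 ≤ F j := fun j => by
    have := pqInt_nonneg hp hpq (n - j)
    have := (hp.trans hpq.le)
    positivity
  have hF_le : ∀ j, F j ≤ 1 := fun j => (div_le_one hIn).2 (pow_mul_pqInt_sub_le hp hpq n j)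
  have hF_one : F 1 = 1 - p ^ (n - 1) / pqInt p q n := by
    have h := pqInt_add p q (n - 1) 1
    rw [Nat.sub_add_cancel (Nat.one_le_iff_ne_zero.2 hn), pqInt_one hpq.ne] at h
    simp only [F]
    field_simp
    linarith
  calc lorentzCoeff p q n k = F 1 * ∏ j ∈ (range k).erase 1, F j :=
        (mul_prod_erase _ F (mem_range.2 hk)).symm
    _ ≤ F 1 * 1 := by
        gcongr
        · exact hF_nonneg 1
        · exact prod_le_one (fun j _ => hF_nonneg j) fun j _ => hF_le j
    _ = _ := by rw [mul_one, hF_one]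

theorem pow_div_pqInt_le_norm_lorentzCoeff_sub_one (hp : 0 ≤ p) (hpq : p < q) {n k : ℕ}
    (hn : n ≠ 0) (hk : 2 ≤ k) : p ^ (n - 1) / pqInt p q n ≤ ‖(lorentzCoeff p q n k : ℂ) - 1‖ := by
  have hle := lorentzCoeff_le hp hpq hn hk
  have := pqInt_nonneg hp hpq n
  have : 0 ≤ p ^ (n - 1) / pqInt p q n := by positivity
  rw [← Complex.ofReal_one, ← Complex.ofReal_sub, Complex.norm_real, Real.norm_eq_abs,
    abs_of_nonpos (by linarith)]
  linarith

end Lorentz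

theorem lt_of_pow_mul_lt_pow_mul {p q x y : ℝ} (hp : 0 < p) (hpq : p ≤ q) (hx : 0 ≤ x) {m : ℕ}
    (h : q ^ m * x < p ^ m * y) : x < y :=
  lt_of_mul_lt_mul_left ((mul_le_mul_of_nonneg_right (pow_le_pow_left₀ hp.le hpq m) hx).trans_lt h)
    (pow_nonneg hp.le m)

theorem lorentz_lower_estimate_general (R p q r r₁ : ℝ) (hp : 1 < p) (hpq : p < q)
    (hr : 1 ≤ r) (hrr₁ : q ^ 3 * r < p ^ 3 * r₁) (hr₁R : q ^ 4 * r₁ < p ^ 4 * R)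
    (f : ℂ → ℂ) (c : ℕ → ℂ)
    (hf : ∀ z : ℂ, ‖z‖ < R → HasSum (fun k => c k * z ^ k) (f z))
    (hnotlin : ∃ k : ℕ, 2 ≤ k ∧ c k ≠ 0) :
    ∃ C : ℝ, 0 < C ∧ ∀ n : ℕ, 1 ≤ n →
      p ^ n / pqInt p q n * C ≤ supNorm r (fun z => lorentz p q n f z - f z) := by
  obtain ⟨k, hk, hck⟩ := hnotlin
  have hp₀ : 0 < p := one_pos.trans hp
  have hr₀ : 0 < r := one_pos.trans_le hr
  have hrr₁' : r < r₁ := lt_of_pow_mul_lt_pow_mul hp₀ hpq.le hr₀.le hrr₁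
  have hr₁R' : r₁ < R := lt_of_pow_mul_lt_pow_mul hp₀ hpq.le (hr₀.trans hrr₁').le hr₁R
  refine ⟨‖c k‖ * r ^ k / p, by positivity, fun n hn => ?_⟩
  calc p ^ n / pqInt p q n * (‖c k‖ * r ^ k / p)
      = p ^ (n - 1) / pqInt p q n * ‖c k‖ * r ^ k := by
        rw [← Nat.sub_add_cancel hn, pow_succ, Nat.add_sub_cancel]
        field_simp
    _ ≤ ‖((lorentzCoeff p q n k : ℂ) - 1) * c k‖ * r ^ k := by
        rw [norm_mul]
        gcongr
        exact pow_div_pqInt_le_norm_lorentzCoeff_sub_one hp₀.le hpq (by omega) hk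
    _ ≤ supNorm r (fun z => lorentz p q n f z - f z) :=
        norm_coeff_mul_pow_le_supNorm (fun z hz => hasSum_lorentz_sub_self hp₀.le hpq hf n hz) hr₀
          (hrr₁'.trans hr₁R') k

theorem lorentz_lower_estimate (R p q r r₁ : ℝ) (hp : 1 < p) (hpq : p < q) (hqR : q < R)
    (hr : 1 ≤ r) (hrr₁ : q ^ 3 * r < p ^ 3 * r₁) (hr₁R : q ^ 4 * r₁ < p ^ 4 * R)
    (f : ℂ → ℂ) (c : ℕ → ℂ)
    (hf : ∀ z : ℂ, ‖z‖ < R → HasSum (fun k => c k * z ^ k) (f z))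
    (hnotlin : ∃ k : ℕ, 2 ≤ k ∧ c k ≠ 0) :
    ∃ C : ℝ, 0 < C ∧ ∀ n : ℕ, 1 ≤ n →
      p ^ n / pqInt p q n * C ≤ supNorm r (fun z => lorentz p q n f z - f z) :=
  lorentz_lower_estimate_general R p q r r₁ hp hpq hr hrr₁ hr₁R f c hf hnotlin
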